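/- arXiv:math/0511719 — 3 statements merged into one kernel-verified Lean document; each statement's English description precedes it below -/
import Mathlib

section
/- Let U ⊆ ℂ be open and let f : ℂ → M_d(ℂ) be analytic on U with f'(x) invertible for all x ∈ U. Let (A B; C D) be an invertible 2d×2d complex matrix written in d×d blocks, and suppose C·f(x)+D is invertible for all x ∈ U. Define g(x) := (A·f(x)+B)·(C·f(x)+D)⁻¹. Then g'(x) is invertible for all x ∈ U and the matrix-valued Schwartz derivative transforms by conjugation: S(g)(x) = (C·f(x)+D) · S(f)(x) · (C·f(x)+D)⁻¹ for all x ∈ U. -/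
/-!
Write `h = C f + D`, so that `g = (A f + B) h⁻¹`. Differentiating gives `g' = k f' h⁻¹` with
`k = A - g C`, and then `k' = -g' C`; invertibility of the block matrix makes `k` invertible.
Hence the pre-Schwarzian `Q(f) = (f')⁻¹ f''` transforms as `Q(g) = h Q(f) h⁻¹ - 2 C f' h⁻¹`, and
because `h'' = C f'' = h' Q(f)` the inhomogeneous terms cancel in `Q(g)' - ½ Q(g)²`, leaving
`h S(f) h⁻¹`. None of this uses more than the structure of a Banach algebra.
-/

open Matrix

attribute [local instance] Matrix.normedAddCommGroup Matrix.normedSpace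

/-- The matrix-valued Schwartz derivative coefficient
`S(f) = ((f')⁻¹f'')' - (1/2)((f')⁻¹f'')²`. -/
noncomputable def matS {d : ℕ} (f : ℂ → Matrix (Fin d) (Fin d) ℂ) :
    ℂ → Matrix (Fin d) (Fin d) ℂ :=
  fun x => deriv (fun t => (deriv f t)⁻¹ * deriv (deriv f) t) x
    - (1 / 2 : ℂ) • ((deriv f x)⁻¹ * deriv (deriv f) x) ^ 2

open Filter Topology
open scoped Ring

section Mobius

variable {R : Type*} [Ring R]

noncomputable def mobius (A B C D z : R) : R := (A * z + B) * (C * z + D)⁻¹ʳ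

theorem sub_mobius_mul_mul_eq_one {A B C D E G z : R} (hE : A * E + B * G = 1)
    (hG : C * E + D * G = 0) (hz : IsUnit (C * z + D)) :
    (A - mobius A B C D z * C) * (E - z * G) = 1 := by
  have hj := Ring.inverse_mul_cancel _ hz
  set j := (C * z + D)⁻¹ʳ
  calc (A - mobius A B C D z * C) * (E - z * G)
      = (A * E + B * G) - (A * z + B) * j * (C * E + D * G)
          + (A * z + B) * (j * (C * z + D) - 1) * G := by
        simp only [mobius]; noncomm_ring
    _ = 1 := by rw [hE, hG, hj]; noncomm_ring

end Mobius

theorem Matrix.isUnit_sub_mobius_mul {n R : Type*} [Fintype n] [DecidableEq n] [CommRing R]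
    {A B C D z : Matrix n n R} (hM : IsUnit (fromBlocks A B C D)) (hz : IsUnit (C * z + D)) :
    IsUnit (A - mobius A B C D z * C) := by
  obtain ⟨N, hN⟩ := hM.exists_right_inv
  rw [← fromBlocks_toBlocks N, fromBlocks_multiply, ← fromBlocks_one, fromBlocks_inj] at hN
  exact .of_mul_eq_one _ (sub_mobius_mul_mul_eq_one hN.1 hN.2.2.1 hz)

section Schwarzian

variable {𝕜 𝔸 : Type*} [NontriviallyNormedField 𝕜] [NormedRing 𝔸] [NormedAlgebra 𝕜 𝔸]

noncomputable def preSchwarzian (f : 𝕜 → 𝔸) (x : 𝕜) : 𝔸 :=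
  (deriv f x)⁻¹ʳ * deriv (deriv f) x

noncomputable def schwarzian (f : 𝕜 → 𝔸) (x : 𝕜) : 𝔸 :=
  deriv (preSchwarzian f) x - (1 / 2 : 𝕜) • preSchwarzian f x ^ 2

variable [HasSummableGeomSeries 𝔸] {f : 𝕜 → 𝔸} {f' : 𝔸} {x : 𝕜} {A B C D : 𝔸}

theorem HasDerivAt.ringInverse {u : 𝕜 → 𝔸} {u' : 𝔸} (hu : HasDerivAt u u' x)
    (hx : IsUnit (u x)) :
    HasDerivAt (fun t => (u t)⁻¹ʳ) (-((u x)⁻¹ʳ * u' * (u x)⁻¹ʳ)) x := by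
  obtain ⟨v, hv⟩ := hx
  have hinv := hasFDerivAt_ringInverse (𝕜 := 𝕜) v
  rw [hv] at hinv
  rw [← hv, Ring.inverse_unit]
  have hcomp := hinv.comp_hasDerivAt x hu
  simp only [_root_.neg_apply, ContinuousLinearMap.mulLeftRight_apply] at hcomp
  exact hcomp

theorem HasDerivAt.mobius (hf : HasDerivAt f f' x) (hx : IsUnit (C * f x + D)) :
    HasDerivAt (fun t => mobius A B C D (f t))
      ((A - mobius A B C D (f x) * C) * f' * (C * f x + D)⁻¹ʳ) x := by
  have hj := ((hf.const_mul C).add_const D).ringInverse hx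
  refine (((hf.const_mul A).add_const B).fun_mul hj).congr_deriv ?_
  unfold _root_.mobius
  noncomm_ring

theorem isUnit_deriv_mobius (hf : DifferentiableAt 𝕜 f x) (hf' : IsUnit (deriv f x))
    (hh : IsUnit (C * f x + D)) (hk : IsUnit (A - mobius A B C D (f x) * C)) :
    IsUnit (deriv (fun t => mobius A B C D (f t)) x) := by
  rw [(hf.hasDerivAt.mobius hh).deriv]
  exact (hk.mul hf').mul hh.ringInverse

theorem preSchwarzian_mobius (hf : ∀ᶠ t in 𝓝 x, DifferentiableAt 𝕜 f t)
    (hf' : DifferentiableAt 𝕜 (deriv f) x) (hdf : IsUnit (deriv f x))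
    (hh : IsUnit (C * f x + D)) (hk : IsUnit (A - mobius A B C D (f x) * C)) :
    preSchwarzian (fun t => mobius A B C D (f t)) x =
      (C * f x + D) * preSchwarzian f x * (C * f x + D)⁻¹ʳ
        - (2 : 𝕜) • (C * deriv f x * (C * f x + D)⁻¹ʳ) := by
  have hfx := hf.self_of_nhds.hasDerivAt
  have hgx := hfx.mobius (A := A) (B := B) hh
  have hunit : ∀ᶠ t in 𝓝 x, IsUnit (C * f t + D) :=
    ((hfx.const_mul C).add_const D).continuousAt.eventually_mem (Units.isOpen.mem_nhds hh)
  have hg' : deriv (fun t => mobius A B C D (f t)) =ᶠ[𝓝 x]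
      fun t => (A - mobius A B C D (f t) * C) * deriv f t * (C * f t + D)⁻¹ʳ := by
    filter_upwards [hf, hunit] with t hft ht
    exact (hft.hasDerivAt.mobius ht).deriv
  have hg'' := ((hgx.mul_const C).const_sub A |>.fun_mul hf'.hasDerivAt).fun_mul
    (((hfx.const_mul C).add_const D).ringInverse hh)
  unfold preSchwarzian
  rw [(hg''.congr_of_eventuallyEq hg').deriv, hgx.deriv]
  obtain ⟨k, hk⟩ := hk
  obtain ⟨F, hF⟩ := hdf
  obtain ⟨h, hh⟩ := hh
  rw [← hk, ← hF, ← hh]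
  simp only [Ring.inverse_unit, ← Units.val_mul]
  simp only [_root_.mul_inv_rev, inv_inv, Units.val_mul, mul_add, mul_neg, add_mul, neg_mul,
    mul_assoc, Units.inv_mul_cancel_left, Units.mul_inv_cancel_left]
  module

theorem schwarzian_mobius [CharZero 𝕜] (hf : ∀ᶠ t in 𝓝 x, DifferentiableAt 𝕜 f t)
    (hf' : ∀ᶠ t in 𝓝 x, DifferentiableAt 𝕜 (deriv f) t)
    (hf'' : DifferentiableAt 𝕜 (deriv (deriv f)) x) (hdf : IsUnit (deriv f x))
    (hh : IsUnit (C * f x + D)) (hk : IsUnit (A - mobius A B C D (f x) * C)) :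
    schwarzian (fun t => mobius A B C D (f t)) x =
      (C * f x + D) * schwarzian f x * (C * f x + D)⁻¹ʳ := by
  have hfx := hf.self_of_nhds.hasDerivAt
  have hf'x := hf'.self_of_nhds.hasDerivAt
  have hhx := (hfx.const_mul C).add_const D
  have hjx := hhx.ringInverse hh
  have hq : DifferentiableAt 𝕜 (preSchwarzian f) x := (hf'.self_of_nhds.inverse hdf).mul hf''
  have hPx := ((hhx.fun_mul hq.hasDerivAt).fun_mul hjx).sub
    (((hf'x.const_mul C).fun_mul hjx).const_smul (2 : 𝕜))
  have hP : preSchwarzian (fun t => mobius A B C D (f t)) =ᶠ[𝓝 x] fun t =>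
      (C * f t + D) * preSchwarzian f t * (C * f t + D)⁻¹ʳ
        - (2 : 𝕜) • (C * deriv f t * (C * f t + D)⁻¹ʳ) := by
    have hgx := hfx.mobius (A := A) (B := B) hh
    filter_upwards [hf.eventually_nhds, hf',
      hf'x.continuousAt.eventually_mem (Units.isOpen.mem_nhds hdf),
      hhx.continuousAt.eventually_mem (Units.isOpen.mem_nhds hh),
      (continuousAt_const.sub (hgx.continuousAt.mul continuousAt_const)).eventually_mem
        (Units.isOpen.mem_nhds hk)] with t hft hf't hdft hht hkt
    exact preSchwarzian_mobius hft hf't hdft hht hkt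
  unfold schwarzian
  rw [(hPx.congr_of_eventuallyEq hP).deriv, hP.eq_of_nhds]
  have hce : C * deriv f x * preSchwarzian f x = C * deriv (deriv f) x := by
    rw [preSchwarzian, mul_assoc C, Ring.mul_inverse_cancel_left _ _ hdf]
  rw [← hce]
  obtain ⟨h, hh⟩ := hh
  rw [← hh, Ring.inverse_unit]
  simp only [pow_two, mul_sub, sub_mul, add_mul, smul_sub, smul_add, mul_smul_comm,
    smul_mul_assoc, mul_assoc, smul_smul, mul_neg, Units.inv_mul_cancel_left]
  module

end Schwarzian

section LinftyOp

/- The entrywise norm on matrices is not submultiplicative. The `L∞`-operator norm is, and it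
induces the same topology, so `deriv` and `DifferentiableAt` mean the same thing (definitionally)
for both norms. -/
attribute [-instance] Matrix.normedAddCommGroup Matrix.normedSpace
attribute [local instance] Matrix.linftyOpNormedRing Matrix.linftyOpNormedAlgebra

theorem matS_eq_schwarzian {d : ℕ} (f : ℂ → Matrix (Fin d) (Fin d) ℂ) :
    matS f = schwarzian f := by
  funext x
  simp only [matS, Matrix.nonsing_inv_eq_ringInverse]
  rfl

theorem isUnit_deriv_mobius_and_matS_mobius {d : ℕ} {f : ℂ → Matrix (Fin d) (Fin d) ℂ}
    {A B C D : Matrix (Fin d) (Fin d) ℂ} {x : ℂ} (hf : ∀ᶠ t in 𝓝 x, DifferentiableAt ℂ f t)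
    (hdf : IsUnit (deriv f x)) (hM : IsUnit (fromBlocks A B C D)) (hh : IsUnit (C * f x + D)) :
    IsUnit (deriv (fun t => mobius A B C D (f t)) x) ∧
      matS (fun t => mobius A B C D (f t)) x = (C * f x + D) * matS f x * (C * f x + D)⁻¹ := by
  have hk := isUnit_sub_mobius_mul hM hh
  have hfa := Complex.analyticAt_iff_eventually_differentiableAt.2 hf
  refine ⟨isUnit_deriv_mobius hf.self_of_nhds hdf hh hk, ?_⟩
  rw [matS_eq_schwarzian, matS_eq_schwarzian, nonsing_inv_eq_ringInverse]
  exact schwarzian_mobius hf (hfa.deriv.eventually_analyticAt.mono fun _ h => h.differentiableAt)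
    hfa.deriv.deriv.differentiableAt hdf hh hk

end LinftyOp

theorem matS_GL2d_conjugation_general {d : ℕ} (U : Set ℂ)
    (f : ℂ → Matrix (Fin d) (Fin d) ℂ) (hf : AnalyticOnNhd ℂ f U)
    (hf' : ∀ x ∈ U, IsUnit (deriv f x))
    (A B C D : Matrix (Fin d) (Fin d) ℂ)
    (hblk : IsUnit (Matrix.fromBlocks A B C D))
    (hden : ∀ x ∈ U, IsUnit (C * f x + D))
    (g : ℂ → Matrix (Fin d) (Fin d) ℂ)
    (hg : ∀ x, g x = (A * f x + B) * (C * f x + D)⁻¹) :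
    ∀ x ∈ U, IsUnit (deriv g x) ∧
      matS g x = (C * f x + D) * matS f x * (C * f x + D)⁻¹ := by
  obtain rfl : g = fun t => mobius A B C D (f t) :=
    funext fun t => by rw [hg, mobius, nonsing_inv_eq_ringInverse]
  intro x hx
  exact isUnit_deriv_mobius_and_matS_mobius
    ((hf x hx).eventually_analyticAt.mono fun _ h => h.differentiableAt) (hf' x hx) hblk (hden x hx)

/-- The matrix Schwartz derivative transforms by conjugation under the
fractional linear action of `GL_{2d}(ℂ)`. -/
theorem matS_GL2d_conjugation {d : ℕ} (U : Set ℂ) (hU : IsOpen U)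
    (f : ℂ → Matrix (Fin d) (Fin d) ℂ) (hf : AnalyticOnNhd ℂ f U)
    (hf' : ∀ x ∈ U, IsUnit (deriv f x))
    (A B C D : Matrix (Fin d) (Fin d) ℂ)
    (hblk : IsUnit (Matrix.fromBlocks A B C D))
    (hden : ∀ x ∈ U, IsUnit (C * f x + D))
    (g : ℂ → Matrix (Fin d) (Fin d) ℂ)
    (hg : ∀ x, g x = (A * f x + B) * (C * f x + D)⁻¹) :
    ∀ x ∈ U, IsUnit (deriv g x) ∧
      matS g x = (C * f x + D) * matS f x * (C * f x + D)⁻¹ :=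
  matS_GL2d_conjugation_general U f hf hf' A B C D hblk hden g hg
end

section
/- Let U ⊆ ℂ be a nonempty connected open set and let f : ℂ → M_d(ℂ) be analytic on U with f'(x) invertible for all x ∈ U. If the matrix-valued Schwartz derivative of f vanishes identically on U, i.e. S(f)(x) = 0 for all x ∈ U, then there exists an invertible 2d×2d complex matrix (A B; C D), written in d×d blocks, such that x·C+D is invertible and f(x) = (x·A+B)·(x·C+D)⁻¹ for all x ∈ U. -/
open Matrix

attribute [local instance] Matrix.normedAddCommGroup Matrix.normedSpace

/-!
With `g = (f')⁻¹ f''`, the equation `S(f) = 0` is the matrix Riccati equation `g' = g²/2`.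
Fix `x₀ ∈ U` and the affine matrix function `P x = 1 - ((x - x₀)/2) g(x₀)`. Then
`w = g P - g(x₀)` solves the linear equation `w' = (g/2) w` with `w(x₀) = 0`, so `w = 0`.
Consequently `(f P)'' = f'' P + 2 f' P' = f' (g P - g(x₀)) = 0`, and `f P = x A + B` is affine.
Multiplying `(A B; C D)` by unipotent block matrices shows
`det (A B; C D) = det (A - f(x) C) · det P(x)` for every `x ∈ U`; at `x₀` this is
`det f'(x₀) ≠ 0`, which makes every `P(x)` invertible.

Uniqueness for the linear equation is local-to-global through the identity theorem; locally, a
solution vanishing at `x₀` has derivative `φ ρ` vanishing to at least the order of `ρ`, whereas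
differentiation lowers a finite order by one, so the order is infinite.
-/

open Set Filter
open scoped Topology

section AnyField

variable {𝕜 : Type*} [NontriviallyNormedField 𝕜]
  {E F G : Type*} [NormedAddCommGroup E] [NormedSpace 𝕜 E] [NormedAddCommGroup F]
  [NormedSpace 𝕜 F] [NormedAddCommGroup G] [NormedSpace 𝕜 G]

theorem ContinuousLinearMap.analyticOrderAt_le_bilinear (B : F →L[𝕜] E →L[𝕜] G) {φ : 𝕜 → F}
    {ρ : 𝕜 → E} {z₀ : 𝕜} (hφ : AnalyticAt 𝕜 φ z₀) (hρ : AnalyticAt 𝕜 ρ z₀) :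
    analyticOrderAt ρ z₀ ≤ analyticOrderAt (fun z => B (φ z) (ρ z)) z₀ := by
  have hB : ∀ {σ : 𝕜 → E}, AnalyticAt 𝕜 σ z₀ → AnalyticAt 𝕜 (fun z => B (φ z) (σ z)) z₀ :=
    fun hσ => (B.analyticAt_bilinear _).comp (hφ.prod hσ)
  refine ENat.forall_natCast_le_iff_le.mp fun k hk => ?_
  obtain ⟨σ, hσ, hρσ⟩ := (natCast_le_analyticOrderAt hρ).mp hk
  refine (natCast_le_analyticOrderAt (hB hρ)).mpr ⟨fun z => B (φ z) (σ z), hB hσ, ?_⟩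
  filter_upwards [hρσ] with z hz
  rw [hz, map_smul]

theorem eventuallyEq_zero_of_deriv_eventuallyEq_bilinear [CharZero 𝕜] [CompleteSpace E]
    (B : F →L[𝕜] E →L[𝕜] E) {φ : 𝕜 → F} {ρ : 𝕜 → E} {z₀ : 𝕜}
    (hφ : AnalyticAt 𝕜 φ z₀) (hρ : AnalyticAt 𝕜 ρ z₀) (hρ₀ : ρ z₀ = 0)
    (hd : deriv ρ =ᶠ[𝓝 z₀] fun z => B (φ z) (ρ z)) : ρ =ᶠ[𝓝 z₀] 0 := by
  have hle : analyticOrderAt ρ z₀ + 1 ≤ analyticOrderAt ρ z₀ :=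
    calc analyticOrderAt ρ z₀ + 1
        ≤ analyticOrderAt (deriv ρ) z₀ + 1 := by
          rw [analyticOrderAt_congr hd]; gcongr; exact B.analyticOrderAt_le_bilinear hφ hρ
      _ = analyticOrderAt ρ z₀ := by simp [hρ.analyticOrderAt_deriv_add_one, hρ₀]
  refine analyticOrderAt_eq_top.mp (by_contra fun hne => ?_)
  exact (hle.trans_lt ((ENat.lt_add_one_iff hne).mpr le_rfl)).false

theorem hasDerivAt_smul_add (C D : E) (x : 𝕜) : HasDerivAt (fun y => y • C + D) C x :=
  (((hasDerivAt_id x).smul_const C).add_const D).congr_deriv (one_smul _ _)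

end AnyField

section ComplexDomain

variable {E F : Type*} [NormedAddCommGroup E] [NormedSpace ℂ E] [CompleteSpace E]
  [NormedAddCommGroup F] [NormedSpace ℂ F] [CompleteSpace F] {U : Set ℂ}

theorem IsPreconnected.eqOn_zero_of_deriv_eq_bilinear (hU : IsOpen U) (hconn : IsPreconnected U)
    (B : F →L[ℂ] E →L[ℂ] E) {φ : ℂ → F} {ρ : ℂ → E} (hφ : DifferentiableOn ℂ φ U)
    (hρ : DifferentiableOn ℂ ρ U) (hd : ∀ z ∈ U, deriv ρ z = B (φ z) (ρ z)) {z₀ : ℂ}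
    (hz₀ : z₀ ∈ U) (hρ₀ : ρ z₀ = 0) : EqOn ρ 0 U := by
  have hρa := hρ.analyticOnNhd hU
  exact hρa.eqOn_zero_of_preconnected_of_eventuallyEq_zero hconn hz₀ <|
    eventuallyEq_zero_of_deriv_eventuallyEq_bilinear B (hφ.analyticOnNhd hU z₀ hz₀)
      (hρa z₀ hz₀) hρ₀ (eventually_of_mem (hU.mem_nhds hz₀) hd)

theorem IsPreconnected.eq_add_smul_deriv_of_deriv_deriv_eq_zero (hU : IsOpen U)
    (hconn : IsPreconnected U) {h : ℂ → E} (hh : DifferentiableOn ℂ h U)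
    (hh'' : ∀ x ∈ U, deriv (deriv h) x = 0) {x₀ : ℂ} (hx₀ : x₀ ∈ U) :
    ∀ x ∈ U, h x = h x₀ + (x - x₀) • deriv h x₀ := by
  have haffine : ∀ x, HasDerivAt (fun y => h x₀ + (y - x₀) • deriv h x₀) (deriv h x₀) x :=
    fun x => by
      simpa using (((hasDerivAt_id x).sub_const x₀).smul_const (deriv h x₀)).const_add (h x₀)
  have hh' : EqOn (deriv h) (fun _ => deriv h x₀) U :=
    hU.eqOn_of_deriv_eq hconn (hh.analyticOnNhd hU).deriv.differentiableOn
      (differentiableOn_const _) (fun x hx => by simp [hh'' x hx]) hx₀ rfl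
  refine hU.eqOn_of_deriv_eq hconn hh
    (fun x _ => (haffine x).differentiableAt.differentiableWithinAt) (fun x hx => ?_) hx₀ (by simp)
  rw [hh' hx, (haffine x).deriv]

end ComplexDomain

section MatrixCalculus

variable {𝕜 : Type*} [NontriviallyNormedField 𝕜] {n : Type*} [Fintype n] [DecidableEq n]

noncomputable def Matrix.mulCLM [CompleteSpace 𝕜] :
    Matrix n n 𝕜 →L[𝕜] Matrix n n 𝕜 →L[𝕜] Matrix n n 𝕜 :=
  LinearMap.toContinuousLinearMap
    (LinearMap.toContinuousLinearMap.toLinearMap ∘ₗ LinearMap.mul 𝕜 (Matrix n n 𝕜))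

variable {u v : 𝕜 → Matrix n n 𝕜} {u' v' : Matrix n n 𝕜} {x : 𝕜}

theorem HasDerivAt.matrix_mul [CompleteSpace 𝕜] (hu : HasDerivAt u u' x)
    (hv : HasDerivAt v v' x) : HasDerivAt (fun y => u y * v y) (u' * v x + u x * v') x :=
  (Matrix.mulCLM.hasDerivAt_of_bilinear (fun _ => hu) (fun _ => hv)).congr_deriv (add_comm _ _)

theorem HasDerivAt.matrix_inv (hu : HasDerivAt u u' x) (hux : IsUnit (u x)) :
    HasDerivAt (fun y => (u y)⁻¹) (-((u x)⁻¹ * u' * (u x)⁻¹)) x := by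
  have hdet : IsUnit (u x).det := (isUnit_iff_isUnit_det _).mp hux
  have hcont : ContinuousAt (fun y => (u y)⁻¹) x :=
    (continuousAt_matrix_inv _ (NormedRing.inverse_continuousAt hdet.unit)).comp hu.continuousAt
  have hunits : ∀ᶠ y in 𝓝 x, IsUnit (u y).det := by
    filter_upwards [(continuous_id.matrix_det.continuousAt.comp hu.continuousAt).eventually_ne
      hdet.ne_zero] with y hy using isUnit_iff_ne_zero.mpr hy
  have hslope : ∀ᶠ y in 𝓝[≠] x,
      -((u y)⁻¹ * slope u x y * (u x)⁻¹) = slope (fun y => (u y)⁻¹) x y := by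
    filter_upwards [nhdsWithin_le_nhds hunits] with y hy
    simp only [slope_def_module, Matrix.mul_smul, Matrix.smul_mul, ← smul_neg]
    rw [Matrix.mul_sub, Matrix.sub_mul, Matrix.nonsing_inv_mul _ hy, Matrix.mul_assoc (u y)⁻¹,
      Matrix.mul_nonsing_inv _ hdet, Matrix.mul_one, Matrix.one_mul, neg_sub]
  have hlim : Tendsto (fun y => -((u y)⁻¹ * slope u x y * (u x)⁻¹)) (𝓝[≠] x)
      (𝓝 (-((u x)⁻¹ * u' * (u x)⁻¹))) :=
    (((hcont.tendsto.mono_left nhdsWithin_le_nhds).mul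
      (hasDerivAt_iff_tendsto_slope.mp hu)).mul tendsto_const_nhds).neg
  exact hasDerivAt_iff_tendsto_slope.mpr (hlim.congr' hslope)

end MatrixCalculus

section ComplexMatrix

variable {n : Type*} [Fintype n] [DecidableEq n] {U : Set ℂ}

theorem AnalyticAt.deriv_deriv_mul_smul_add {u : ℂ → Matrix n n ℂ} {x : ℂ}
    (hu : AnalyticAt ℂ u x) (C D : Matrix n n ℂ) :
    deriv (deriv fun y => u y * (y • C + D)) x
      = deriv (deriv u) x * (x • C + D) + (2 : ℂ) • (deriv u x * C) := by
  have hd : deriv (fun y => u y * (y • C + D)) =ᶠ[𝓝 x]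
      fun y => deriv u y * (y • C + D) + u y * C := by
    filter_upwards [hu.eventually_analyticAt] with y hy
    exact (hy.differentiableAt.hasDerivAt.matrix_mul (hasDerivAt_smul_add C D y)).deriv
  refine hd.deriv_eq.trans (((hu.deriv.differentiableAt.hasDerivAt.matrix_mul
    (hasDerivAt_smul_add C D x)).add
    (hu.differentiableAt.hasDerivAt.matrix_mul (hasDerivAt_const x C))).deriv.trans ?_)
  simp only [mul_zero, add_zero, two_smul]
  abel

theorem IsPreconnected.mul_smul_add_eq_of_deriv_deriv (hU : IsOpen U) (hconn : IsPreconnected U)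
    {f : ℂ → Matrix n n ℂ} (hf : AnalyticOnNhd ℂ f U) {C D : Matrix n n ℂ}
    (hf'' : ∀ x ∈ U, deriv (deriv f) x * (x • C + D) + (2 : ℂ) • (deriv f x * C) = 0)
    {x₀ : ℂ} (hx₀ : x₀ ∈ U) (hP₀ : x₀ • C + D = 1) :
    ∀ x ∈ U, f x * (x • C + D) = f x₀ + (x - x₀) • (deriv f x₀ + f x₀ * C) := by
  have hh : ∀ x ∈ U, HasDerivAt (fun y => f y * (y • C + D))
      (deriv f x * (x • C + D) + f x * C) x := fun x hx =>
    (hf x hx).differentiableAt.hasDerivAt.matrix_mul (hasDerivAt_smul_add C D x)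
  intro x hx
  rw [hconn.eq_add_smul_deriv_of_deriv_deriv_eq_zero hU
    (fun x hx => (hh x hx).differentiableAt.differentiableWithinAt)
    (fun x hx => ((hf x hx).deriv_deriv_mul_smul_add C D).trans (hf'' x hx)) hx₀ x hx,
    (hh x₀ hx₀).deriv, hP₀, Matrix.mul_one, Matrix.mul_one]

theorem IsPreconnected.mul_eq_of_deriv_eq_half_sq (hU : IsOpen U) (hconn : IsPreconnected U)
    {g : ℂ → Matrix n n ℂ} (hg : DifferentiableOn ℂ g U)
    (hg' : ∀ x ∈ U, deriv g x = (1 / 2 : ℂ) • g x ^ 2) {x₀ : ℂ} (hx₀ : x₀ ∈ U) :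
    ∀ x ∈ U, g x * (1 - ((x - x₀) / 2) • g x₀) = g x₀ := by
  set P : ℂ → Matrix n n ℂ := fun x => 1 - ((x - x₀) / 2) • g x₀
  have hP : ∀ x, HasDerivAt P (-((1 / 2 : ℂ) • g x₀)) x := fun x =>
    ((((hasDerivAt_id x).sub_const x₀).div_const 2).smul_const (g x₀)).const_sub 1
      |>.congr_deriv (by simp)
  set w : ℂ → Matrix n n ℂ := fun x => g x * P x - g x₀
  have hw : ∀ x ∈ U, HasDerivAt w ((1 / 2 : ℂ) • g x * w x) x := fun x hx => by
    have hgx : HasDerivAt g ((1 / 2 : ℂ) • g x ^ 2) x :=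
      ((hg x hx).differentiableAt (hU.mem_nhds hx)).hasDerivAt.congr_deriv (hg' x hx)
    refine ((hgx.matrix_mul (hP x)).sub_const (g x₀)).congr_deriv ?_
    simp only [w, sq, Matrix.mul_sub, Matrix.smul_mul, Matrix.mul_smul, Matrix.mul_neg,
      Matrix.mul_assoc]
    abel
  have hw0 : EqOn w 0 U :=
    hconn.eqOn_zero_of_deriv_eq_bilinear hU Matrix.mulCLM (hg.const_smul (1 / 2 : ℂ))
      (fun x hx => (hw x hx).differentiableAt.differentiableWithinAt)
      (fun x hx => (hw x hx).deriv) hx₀ (by simp [w, P])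
  exact fun x hx => sub_eq_zero.mp (hw0 hx)

end ComplexMatrix

theorem Matrix.det_fromBlocks_eq_of_smul_add_eq_mul {R : Type*} [CommRing R] {m : Type*}
    [Fintype m] [DecidableEq m] {A B C D : Matrix m m R} (F : Matrix m m R) (x : R)
    (h : x • A + B = F * (x • C + D)) :
    (fromBlocks A B C D).det = (A - F * C).det * (x • C + D).det := by
  have hprod : fromBlocks 1 (-F) 0 1 * fromBlocks A B C D * fromBlocks 1 (x • 1) 0 1
      = fromBlocks (A - F * C) 0 C (x • C + D) := by
    obtain rfl : B = F * (x • C + D) - x • A := by rw [← h]; abel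
    simp only [fromBlocks_multiply]
    congr 1 <;> simp [Matrix.mul_add] <;> abel
  simpa [det_fromBlocks_zero₂₁, det_fromBlocks_zero₁₂] using congrArg det hprod

theorem Matrix.isUnit_of_smul_add_eq_mul {n : Type*} [Fintype n] [DecidableEq n]
    {U : Set ℂ} {f : ℂ → Matrix n n ℂ} {A B C D : Matrix n n ℂ} {x₀ : ℂ} (hx₀ : x₀ ∈ U)
    (hP₀ : x₀ • C + D = 1) (hA : IsUnit (A - f x₀ * C))
    (hmoeb : ∀ x ∈ U, x • A + B = f x * (x • C + D)) :
    IsUnit (fromBlocks A B C D) ∧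
      ∀ x ∈ U, IsUnit (x • C + D) ∧ f x = (x • A + B) * (x • C + D)⁻¹ := by
  have hdet : ∀ x ∈ U, (fromBlocks A B C D).det = (A - f x * C).det * (x • C + D).det :=
    fun x hx => det_fromBlocks_eq_of_smul_add_eq_mul (f x) x (hmoeb x hx)
  have hM : IsUnit (fromBlocks A B C D).det := by
    rw [hdet x₀ hx₀, hP₀, det_one, mul_one]
    exact (isUnit_iff_isUnit_det _).mp hA
  refine ⟨(isUnit_iff_isUnit_det _).mpr hM, fun x hx => ?_⟩
  have hPx : IsUnit (x • C + D).det := isUnit_of_mul_isUnit_right (hdet x hx ▸ hM)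
  refine ⟨(isUnit_iff_isUnit_det _).mpr hPx, ?_⟩
  rw [hmoeb x hx, Matrix.mul_assoc, Matrix.mul_nonsing_inv _ hPx, Matrix.mul_one]

/-- If the matrix Schwartz derivative of `f` vanishes on a nonempty connected
open set, then `f` is a matrix Möbius function there. -/
theorem matS_zero_implies_matrix_moebius {d : ℕ} (U : Set ℂ) (hU : IsOpen U)
    (hne : U.Nonempty) (hconn : IsPreconnected U)
    (f : ℂ → Matrix (Fin d) (Fin d) ℂ) (hf : AnalyticOnNhd ℂ f U)
    (hf' : ∀ x ∈ U, IsUnit (deriv f x))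
    (hS : ∀ x ∈ U, matS f x = 0) :
    ∃ A B C D : Matrix (Fin d) (Fin d) ℂ,
      IsUnit (Matrix.fromBlocks A B C D) ∧
      ∀ x ∈ U, IsUnit (x • C + D) ∧ f x = (x • A + B) * (x • C + D)⁻¹ := by
  obtain ⟨x₀, hx₀⟩ := hne
  set g : ℂ → Matrix (Fin d) (Fin d) ℂ := fun x => (deriv f x)⁻¹ * deriv (deriv f) x
  have hg : DifferentiableOn ℂ g U := fun x hx =>
    (((hf.deriv x hx).differentiableAt.hasDerivAt.matrix_inv (hf' x hx)).matrix_mul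
      (hf.deriv.deriv x hx).differentiableAt.hasDerivAt).differentiableAt.differentiableWithinAt
  have hgP := hconn.mul_eq_of_deriv_eq_half_sq hU hg (fun x hx => sub_eq_zero.mp (hS x hx)) hx₀
  set C := -((1 / 2 : ℂ) • g x₀)
  set D := 1 - x₀ • C
  set A := deriv f x₀ + f x₀ * C
  set B := f x₀ - x₀ • A
  have hf'' : ∀ x ∈ U, deriv (deriv f) x * (x • C + D) + (2 : ℂ) • (deriv f x * C) = 0 := by
    intro x hx
    have hf'g : deriv (deriv f) x = deriv f x * g x := by
      simp only [g, ← Matrix.mul_assoc,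
        Matrix.mul_nonsing_inv _ ((isUnit_iff_isUnit_det _).mp (hf' x hx)), Matrix.one_mul]
    have hP : x • C + D = 1 - ((x - x₀) / 2) • g x₀ := by simp only [D, C]; module
    rw [hf'g, Matrix.mul_assoc, hP, hgP x hx]
    simp only [C, Matrix.mul_neg, Matrix.mul_smul]
    module
  have hP₀ : x₀ • C + D = 1 := by simp [D]
  refine ⟨A, B, C, D, Matrix.isUnit_of_smul_add_eq_mul hx₀ hP₀ ?_ fun x hx => ?_⟩
  · rw [show A - f x₀ * C = deriv f x₀ by simp [A]]
    exact hf' x₀ hx₀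
  · rw [hconn.mul_smul_add_eq_of_deriv_deriv hU hf hf'' hx₀ hP₀ x hx]
    simp only [B, A]
    module
end

section
/- Let x₀ ∈ ℂ and let y₀, y₀', z₀ ∈ M_d(ℂ) with y₀' invertible. Set A := y₀' − y₀·z₀, B := y₀ + y₀·z₀·x₀ − y₀'·x₀, C := −z₀, D := 1 + z₀·x₀. Then the 2d×2d block matrix (A B; C D) is invertible, x₀·C+D = 1, and the function f(x) := (x·A+B)·(x·C+D)⁻¹, defined on the open set where x·C+D is invertible, satisfies the initial conditions f(x₀) = y₀, f'(x₀) = y₀', and (1/2)·(f'(x₀))⁻¹·f''(x₀) = z₀. -/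
open Matrix

attribute [local instance] Matrix.normedAddCommGroup Matrix.normedSpace

/-!
In a Banach algebra the Möbius map `m x = (x • A + B) * (x • C + D)⁻¹` has derivative
`m' = (A - m * C) * (x • C + D)⁻¹`, and differentiating once more gives
`m'' = -2 • (m' * C * (x • C + D)⁻¹)`. For the given `A, B, C, D` we have `x₀ • C + D = 1`,
so `m x₀ = x₀ • A + B = y₀`, `m' x₀ = A - y₀ * C = y₀'` and `m'' x₀ = 2 • (y₀' * z₀)`.
The column operation `(A B; C D) * (1 x₀; 0 1) = (A y₀; C 1)` shows that the block matrix has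
determinant `det (A - y₀ * C) = det y₀'`.
-/

open Ring

theorem map_ringInverse {M N F : Type*} [MonoidWithZero M] [MonoidWithZero N] [EquivLike F M N]
    [MulEquivClass F M N] (e : F) (a : M) : e a⁻¹ʳ = (e a)⁻¹ʳ := by
  by_cases ha : IsUnit a
  · rw [← one_mul (e a)⁻¹ʳ, eq_mul_inverse_iff_mul_eq _ _ _ (ha.map e), ← map_mul,
      inverse_mul_cancel _ ha, map_one]
  · rw [inverse_non_unit _ ha, inverse_non_unit _ (by rwa [isUnit_map_iff]), map_zero]

theorem Matrix.det_fromBlocks_of_mul_add_eq_one {m n R : Type*} [Fintype m] [Fintype n]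
    [DecidableEq m] [DecidableEq n] [CommRing R] {A : Matrix m m R} {B : Matrix m n R}
    {C : Matrix n m R} {D : Matrix n n R} (X : Matrix m n R) (h : C * X + D = 1) :
    (fromBlocks A B C D).det = (A - (A * X + B) * C).det := by
  have hcol : fromBlocks A B C D * fromBlocks 1 X 0 1 = fromBlocks A (A * X + B) C 1 := by
    simp [fromBlocks_multiply, h]
  simpa [det_fromBlocks_zero₂₁, det_fromBlocks_one₂₂] using congrArg det hcol

section Calculus

variable {𝕜 : Type*} [NontriviallyNormedField 𝕜]

theorem hasDerivAt_smul_const_add_const {E : Type*} [NormedAddCommGroup E] [NormedSpace 𝕜 E]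
    (u v : E) (x : 𝕜) : HasDerivAt (fun y : 𝕜 => y • u + v) u x := by
  simpa using ((hasDerivAt_id x).smul_const u).add_const v

theorem ContinuousLinearEquiv.deriv_comp {E F : Type*} [NormedAddCommGroup E] [NormedSpace 𝕜 E]
    [NormedAddCommGroup F] [NormedSpace 𝕜 F] (L : E ≃L[𝕜] F) (g : 𝕜 → E) :
    deriv (L ∘ g) = L ∘ deriv g :=
  funext fun x => congrArg (fun T => T 1) (L.comp_fderiv (f := g) (x := x))

theorem HasDerivAt.ringInverse_s6 {R : Type*} [NormedRing R] [NormedAlgebra 𝕜 R]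
    [HasSummableGeomSeries R] {g : 𝕜 → R} {g' : R} {x : 𝕜}
    (hg : HasDerivAt g g' x) (hx : IsUnit (g x)) :
    HasDerivAt (fun y => (g y)⁻¹ʳ) (-((g x)⁻¹ʳ * g' * (g x)⁻¹ʳ)) x := by
  obtain ⟨u, hu⟩ := hx
  have hinv : (g x)⁻¹ʳ = ↑u⁻¹ := by rw [← hu, inverse_unit]
  have hu' := hasFDerivAt_ringInverse (𝕜 := 𝕜) u
  rw [hu] at hu'
  simpa [hinv, Function.comp_def] using hu'.comp_hasDerivAt x hg

end Calculus

noncomputable def moebius {𝕜 R : Type*} [SMul 𝕜 R] [Semiring R] (A B C D : R) (x : 𝕜) : R :=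
  (x • A + B) * (x • C + D)⁻¹ʳ

section Algebra

variable {𝕜 R S : Type*} [CommSemiring 𝕜] [Semiring R] [Algebra 𝕜 R] [Semiring S] [Algebra 𝕜 S]

theorem map_moebius (Φ : R ≃ₐ[𝕜] S) (A B C D : R) (x : 𝕜) :
    Φ (moebius A B C D x) = moebius (Φ A) (Φ B) (Φ C) (Φ D) x := by
  simp [moebius, map_ringInverse]

theorem moebius_eq_comp (Φ : R ≃ₐ[𝕜] S) (A B C D : R) :
    (moebius A B C D : 𝕜 → R) = Φ.symm ∘ moebius (Φ A) (Φ B) (Φ C) (Φ D) := by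
  funext x
  rw [Function.comp_apply, ← map_moebius, AlgEquiv.symm_apply_apply]

end Algebra

section BanachAlgebra

variable {𝕜 R : Type*} [NontriviallyNormedField 𝕜] [NormedRing R] [NormedAlgebra 𝕜 R]
  [HasSummableGeomSeries R] {A B C D : R} {x : 𝕜}

theorem hasDerivAt_moebius (hx : IsUnit (x • C + D)) :
    HasDerivAt (moebius A B C D) ((A - moebius A B C D x * C) * (x • C + D)⁻¹ʳ) x := by
  refine ((hasDerivAt_smul_const_add_const A B x).fun_mul
    ((hasDerivAt_smul_const_add_const C D x).ringInverse_s6 hx)).congr_deriv ?_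
  unfold moebius
  noncomm_ring

theorem eventuallyEq_deriv_moebius (hx : IsUnit (x • C + D)) :
    deriv (moebius A B C D) =ᶠ[nhds x]
      fun y => (A - moebius A B C D y * C) * (y • C + D)⁻¹ʳ := by
  have hcont : Continuous fun y : 𝕜 => y • C + D := by fun_prop
  filter_upwards [hcont.continuousAt.preimage_mem_nhds (Units.isOpen.mem_nhds hx)] with y hy
  exact (hasDerivAt_moebius hy).deriv

theorem hasDerivAt_deriv_moebius (hx : IsUnit (x • C + D)) :
    HasDerivAt (deriv (moebius A B C D))
      ((-2 : 𝕜) • (deriv (moebius A B C D) x * C * (x • C + D)⁻¹ʳ)) x := by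
  have h := (((hasDerivAt_moebius (A := A) (B := B) hx).mul_const C).const_sub A).fun_mul
    ((hasDerivAt_smul_const_add_const C D x).ringInverse_s6 hx)
  rw [(hasDerivAt_moebius hx).deriv]
  refine (h.congr_of_eventuallyEq (eventuallyEq_deriv_moebius hx)).congr_deriv ?_
  rw [neg_smul, two_smul]
  noncomm_ring

end BanachAlgebra

/- The sup norm on matrices is not submultiplicative, so the Banach-algebra computations are
transported along the algebra isomorphism with the operators on Euclidean space; any linear
equivalence of finite-dimensional spaces is continuous. -/
section Matrix

variable {𝕜 n : Type*} [Fintype n] [DecidableEq n]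

theorem Matrix.deriv_algEquiv_symm_comp [NontriviallyNormedField 𝕜] [CompleteSpace 𝕜]
    {S : Type*} [NormedRing S] [NormedAlgebra 𝕜 S] (Φ : Matrix n n 𝕜 ≃ₐ[𝕜] S) (g : 𝕜 → S) :
    deriv (Φ.symm ∘ g) = Φ.symm ∘ deriv g :=
  Φ.toLinearEquiv.toContinuousLinearEquiv.symm.deriv_comp g

variable [RCLike 𝕜] {A B C D : Matrix n n 𝕜} {x : 𝕜}

theorem Matrix.deriv_moebius (hx : IsUnit (x • C + D)) :
    deriv (moebius A B C D) x = (A - moebius A B C D x * C) * (x • C + D)⁻¹ʳ := by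
  set Φ := (toEuclideanCLM (n := n) (𝕜 := 𝕜)).toAlgEquiv
  have hx' : IsUnit (x • Φ C + Φ D) := by simpa using hx.map Φ
  rw [moebius_eq_comp Φ, deriv_algEquiv_symm_comp, Function.comp_apply,
    (hasDerivAt_moebius hx').deriv]
  simp only [map_mul, map_sub, map_ringInverse, map_add, map_smul, AlgEquiv.symm_apply_apply,
    Function.comp_apply]

theorem Matrix.deriv_deriv_moebius (hx : IsUnit (x • C + D)) :
    deriv (deriv (moebius A B C D)) x =
      (-2 : 𝕜) • (deriv (moebius A B C D) x * C * (x • C + D)⁻¹ʳ) := by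
  set Φ := (toEuclideanCLM (n := n) (𝕜 := 𝕜)).toAlgEquiv
  have hx' : IsUnit (x • Φ C + Φ D) := by simpa using hx.map Φ
  rw [moebius_eq_comp Φ, deriv_algEquiv_symm_comp, deriv_algEquiv_symm_comp, Function.comp_apply,
    Function.comp_apply, (hasDerivAt_deriv_moebius hx').deriv]
  simp only [map_smul, map_mul, map_ringInverse, map_add, AlgEquiv.symm_apply_apply]

end Matrix

/-- The matrix Möbius function with blocks
`A = y₀' - y₀z₀`, `B = y₀ + y₀z₀x₀ - y₀'x₀`, `C = -z₀`, `D = 1 + z₀x₀`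
solves the initial value problem `(f, f', (1/2)(f')⁻¹f'')(x₀) = (y₀, y₀', z₀)`,
and the block matrix is invertible with `x₀C + D = 1`. -/
theorem matrix_moebius_initial_conditions {d : ℕ} (x₀ : ℂ)
    (y₀ y₀' z₀ : Matrix (Fin d) (Fin d) ℂ) (hy₀' : IsUnit y₀')
    (A B C D : Matrix (Fin d) (Fin d) ℂ)
    (hA : A = y₀' - y₀ * z₀)
    (hB : B = y₀ + x₀ • (y₀ * z₀) - x₀ • y₀')
    (hC : C = -z₀)
    (hD : D = 1 + x₀ • z₀)
    (f : ℂ → Matrix (Fin d) (Fin d) ℂ)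
    (hf : ∀ x, f x = (x • A + B) * (x • C + D)⁻¹) :
    IsUnit (Matrix.fromBlocks A B C D) ∧ x₀ • C + D = 1 ∧
      f x₀ = y₀ ∧ deriv f x₀ = y₀' ∧
      (1 / 2 : ℂ) • ((deriv f x₀)⁻¹ * deriv (deriv f) x₀) = z₀ := by
  have hg : x₀ • C + D = 1 := by rw [hC, hD]; module
  have hy : x₀ • A + B = y₀ := by rw [hA, hB]; module
  have hAy : A - y₀ * C = y₀' := by rw [hA, hC]; noncomm_ring
  have hm : f = moebius A B C D :=
    funext fun x => by rw [hf, moebius, nonsing_inv_eq_ringInverse]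
  have hunit : IsUnit (x₀ • C + D) := hg ▸ isUnit_one
  have hf₀ : f x₀ = y₀ := by rw [hm, moebius, hy, hg, inverse_one, mul_one]
  have hf₁ : deriv f x₀ = y₀' := by
    rw [hm, Matrix.deriv_moebius hunit, ← hm, hf₀, hg, inverse_one, mul_one, hAy]
  have hf₂ : deriv (deriv f) x₀ = (-2 : ℂ) • (y₀' * C) := by
    rw [hm, Matrix.deriv_deriv_moebius hunit, ← hm, hf₁, hg, inverse_one, mul_one]
  refine ⟨?_, hg, hf₀, hf₁, ?_⟩
  · have hdet := det_fromBlocks_of_mul_add_eq_one (A := A) (B := B) (x₀ • 1) (by simpa using hg)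
    rw [Matrix.mul_smul, mul_one, hy, hAy] at hdet
    rw [isUnit_iff_isUnit_det, hdet, ← isUnit_iff_isUnit_det]
    exact hy₀'
  · rw [hf₁, hf₂, hC, mul_smul_comm, smul_smul, ← mul_assoc,
      nonsing_inv_mul _ ((isUnit_iff_isUnit_det _).mp hy₀')]
    norm_num
end
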